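/- arXiv:0801.0059 — 6 statements merged into one kernel-verified Lean document; each statement's English description precedes it below -/
import Mathlib

section
/- Let k ≥ 2 be an even integer and let x be an integer. Suppose b_1 < b_2 < ... < b_m are integers with b_i + 1 < x for all i, and the b_i are spaced so that b_{i+1} ≥ b_i + 2 (so that x - b_i - 1 ≥ 2i - 1 counting from the largest, i.e., the distances x - b_i - 1 are distinct odd-spaced positive integers ≥ 1). Then the product over i ≤ m ≤ k/2 of (x - b_i)/(x - b_i - 1) is at most ∏_{i=1}^{k/2} (1 + 1/(2i-1)), which is at most 2√k. -/
open Finset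

/-!
Counting from the largest root, the spacing `b (j + 1) ≥ b j + 2` and `b j + 1 < x` give
`x - b i - 1 ≥ 2 * Fin.rev i + 1`, so the factor `(x - b i) / (x - b i - 1) = 1 + 1 / (x - b i - 1)`
is at most `1 + 1 / (2 * Fin.rev i + 1)`. Reindexing by `Fin.rev` turns the product into a
partial product of `∏ (2i + 2) / (2i + 1)`, whose square grows by at most `4` per factor
since `(4n + 1)(2n + 2)² = (4n + 5)(2n + 1)² - 1`.
-/

lemma sq_prod_one_add_inv_odd_le (n : ℕ) :
    (∏ i ∈ range n, (1 + 1 / (2 * (i : ℝ) + 1))) ^ 2 ≤ 4 * n + 1 := by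
  induction n with
  | zero => simp
  | succ n ih =>
    have hn : (0 : ℝ) < 2 * n + 1 := by positivity
    have factor : (1 + 1 / (2 * (n : ℝ) + 1)) ^ 2 * (4 * n + 1) ≤ 4 * (n + 1 : ℕ) + 1 := by
      rw [one_add_div hn.ne', div_pow, div_mul_eq_mul_div, div_le_iff₀ (by positivity)]
      push_cast
      nlinarith
    calc (∏ i ∈ range (n + 1), (1 + 1 / (2 * (i : ℝ) + 1))) ^ 2
        = (1 + 1 / (2 * (n : ℝ) + 1)) ^ 2 * (∏ i ∈ range n, (1 + 1 / (2 * (i : ℝ) + 1))) ^ 2 := by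
          rw [prod_range_succ, mul_pow, mul_comm]
      _ ≤ (1 + 1 / (2 * (n : ℝ) + 1)) ^ 2 * (4 * n + 1) := by gcongr
      _ ≤ 4 * (n + 1 : ℕ) + 1 := factor

lemma prod_one_add_inv_odd_le_two_mul_sqrt {k : ℕ} (hk : 1 ≤ k) :
    ∏ i ∈ range (k / 2), (1 + 1 / (2 * (i : ℝ) + 1)) ≤ 2 * √k := by
  have hsq : (∏ i ∈ range (k / 2), (1 + 1 / (2 * (i : ℝ) + 1))) ^ 2 ≤ 4 * k := by
    refine (sq_prod_one_add_inv_odd_le _).trans ?_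
    have : ((k / 2 : ℕ) : ℝ) * 2 ≤ k := by exact_mod_cast Nat.div_mul_le_self k 2
    have : (1 : ℝ) ≤ k := by exact_mod_cast hk
    linarith
  calc _ ≤ √(4 * k) := (le_abs_self _).trans (Real.abs_le_sqrt hsq)
    _ = 2 * √k := by rw [Real.sqrt_mul' _ k.cast_nonneg, show (4 : ℝ) = 2 ^ 2 by norm_num,
      Real.sqrt_sq zero_le_two]

lemma prod_one_add_inv_odd_mono {m n : ℕ} (h : m ≤ n) :
    ∏ i ∈ range m, (1 + 1 / (2 * (i : ℝ) + 1)) ≤ ∏ i ∈ range n, (1 + 1 / (2 * (i : ℝ) + 1)) :=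
  prod_le_prod_of_subset_of_one_le (range_subset_range.mpr h) (fun _ _ ↦ by positivity)
    fun _ _ _ ↦ le_add_of_nonneg_right (by positivity)

lemma div_sub_one_le_one_add_one_div {a d : ℝ} (hd : 0 < d) (h : d ≤ a - 1) :
    a / (a - 1) ≤ 1 + 1 / d := by
  have ha : a - 1 ≠ 0 := by linarith
  calc a / (a - 1) = 1 + 1 / (a - 1) := by field_simp; ring
    _ ≤ 1 + 1 / d := by gcongr

lemma add_two_mul_le_of_spacing {m : ℕ} {b : Fin m → ℤ}
    (hspace : ∀ i : Fin m, ∀ h : (i : ℕ) + 1 < m, b ⟨(i : ℕ) + 1, h⟩ ≥ b i + 2)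
    (i : Fin m) (d : ℕ) (h : (i : ℕ) + d < m) : b i + 2 * d ≤ b ⟨i + d, h⟩ := by
  induction d with
  | zero => simp
  | succ d ih =>
    have step : b ⟨i + (d + 1), h⟩ ≥ b ⟨i + d, _⟩ + 2 := hspace ⟨i + d, by omega⟩ h
    have := ih (by omega)
    push_cast
    omega

lemma two_mul_rev_add_one_le {m : ℕ} {b : Fin m → ℤ} {x : ℤ}
    (hspace : ∀ i : Fin m, ∀ h : (i : ℕ) + 1 < m, b ⟨(i : ℕ) + 1, h⟩ ≥ b i + 2)
    (hlt : ∀ i, b i + 1 < x) (i : Fin m) : 2 * (i.rev : ℕ) + 1 ≤ x - b i - 1 := by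
  have hlast := add_two_mul_le_of_spacing hspace i i.rev (by rw [Fin.val_rev]; omega)
  have := hlt ⟨i + i.rev, by rw [Fin.val_rev]; omega⟩
  omega

theorem stmt1_general (k : ℕ) (hk : 2 ≤ k) (x : ℤ) (m : ℕ) (hm : m ≤ k / 2)
    (b : Fin m → ℤ) (hlt : ∀ i, b i + 1 < x)
    (hspace : ∀ i : Fin m, ∀ h : (i : ℕ) + 1 < m, b ⟨(i : ℕ) + 1, h⟩ ≥ b i + 2) :
    (∏ i, ((x : ℝ) - (b i : ℝ)) / ((x : ℝ) - (b i : ℝ) - 1)) ≤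
      (∏ i ∈ Finset.range (k / 2), (1 + 1 / (2 * (i : ℝ) + 1))) ∧
    (∏ i ∈ Finset.range (k / 2), (1 + 1 / (2 * (i : ℝ) + 1))) ≤ 2 * Real.sqrt k := by
  refine ⟨?_, prod_one_add_inv_odd_le_two_mul_sqrt (by omega)⟩
  have hgap : ∀ i, (1 : ℝ) ≤ x - b i - 1 := fun i ↦ by
    have : ((b i + 1 + 1 : ℤ) : ℝ) ≤ x := by exact_mod_cast Int.add_one_le_of_lt (hlt i)
    push_cast at this
    linarith
  calc (∏ i, ((x : ℝ) - (b i : ℝ)) / ((x : ℝ) - (b i : ℝ) - 1))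
      ≤ ∏ i : Fin m, (1 + 1 / (2 * (i.rev : ℝ) + 1)) := by
        refine prod_le_prod (fun i _ ↦ div_nonneg (by linarith [hgap i]) (by linarith [hgap i]))
          fun i _ ↦ div_sub_one_le_one_add_one_div (by positivity) ?_
        exact_mod_cast two_mul_rev_add_one_le hspace hlt i
    _ = ∏ i ∈ range m, (1 + 1 / (2 * (i : ℝ) + 1)) := by
        rw [← Fin.prod_univ_eq_prod_range]
        exact Equiv.prod_comp Fin.revPerm (fun i : Fin m ↦ 1 + 1 / (2 * (i : ℝ) + 1))
    _ ≤ _ := prod_one_add_inv_odd_mono hm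

theorem stmt1 (k : ℕ) (hk : 2 ≤ k) (hke : Even k) (x : ℤ) (m : ℕ) (hm : m ≤ k / 2)
    (b : Fin m → ℤ) (hmono : StrictMono b) (hlt : ∀ i, b i + 1 < x)
    (hspace : ∀ i : Fin m, ∀ h : (i : ℕ) + 1 < m, b ⟨(i : ℕ) + 1, h⟩ ≥ b i + 2) :
    (∏ i, ((x : ℝ) - (b i : ℝ)) / ((x : ℝ) - (b i : ℝ) - 1)) ≤
      (∏ i ∈ Finset.range (k / 2), (1 + 1 / (2 * (i : ℝ) + 1))) ∧
    (∏ i ∈ Finset.range (k / 2), (1 + 1 / (2 * (i : ℝ) + 1))) ≤ 2 * Real.sqrt k :=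
  stmt1_general k hk x m hm b hlt hspace
end

section
/- Let n, k be positive integers with k even, and let a_1, ..., a_{k/2} be elements of {0, 1, ..., n-1} that are pairwise distinct and satisfy a_i ≠ a_j + 1 for i ≠ j. Define f(x) = ∏_i (x - a_i)(x - a_i - 1) and g(x) = ∏_i (x - a_i)^2. Then for every integer x in {0, ..., n} with f(x) ≠ 0, we have g(x) ≤ 2√k · f(x). -/
/-!
With `d = x - aᵢ` the factors of `f` and `g` are `d (d - 1)` and `d²`, so
`g / f = ∏ d / (d - 1)`. Factors with `d ≤ -1` are at most `1`. The values `d ≥ 2` are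
distinct and, since no `aᵢ` equals `aⱼ + 1`, no two of them are consecutive; so if there are
`m` of them the largest is at least `2m`, and removing it shows inductively that the square
of their product of ratios is at most `4m + 1 ≤ 4k`.
-/

open Finset

lemma card_le_of_subset_Icc_of_add_one_notMem (T : Finset ℤ) (M : ℤ) (hT : T ⊆ Icc 2 M)
    (hgap : ∀ e ∈ T, e + 1 ∉ T) : #T ≤ (M / 2).toNat := by
  have hinj : Set.InjOn (· / 2) (T : Set ℤ) := by
    intro e he f hf hef
    by_contra hne
    obtain rfl | rfl : f = e + 1 ∨ e = f + 1 := by simp only at hef; omega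
    exacts [hgap e he hf, hgap f hf he]
  have hsub : T.image (· / 2) ⊆ Icc 1 (M / 2) := by
    intro y hy
    obtain ⟨e, he, rfl⟩ := mem_image.mp hy
    have := mem_Icc.mp (hT he)
    rw [mem_Icc]
    omega
  calc #T = #(T.image (· / 2)) := (card_image_of_injOn hinj).symm
    _ ≤ #(Icc 1 (M / 2)) := card_le_card hsub
    _ = (M / 2).toNat := by rw [Int.card_Icc]; omega

lemma div_sub_one_sq_mul_le {a m : ℝ} (hm : 0 ≤ m) (ha : 2 * m + 2 ≤ a) :
    (a / (a - 1)) ^ 2 * (4 * m + 1) ≤ 4 * (m + 1) + 1 := by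
  have ha1 : 0 < a - 1 := by linarith
  rw [div_pow, div_mul_eq_mul_div, div_le_iff₀ (by positivity)]
  -- the difference of the two sides is `(a - 2m - 2)(4a - 2) + 1`
  nlinarith [mul_nonneg (sub_nonneg.mpr ha) (by linarith : (0 : ℝ) ≤ 4 * a - 2)]

lemma prod_div_sub_one_sq_le (T : Finset ℤ) (h2 : ∀ e ∈ T, 2 ≤ e)
    (hgap : ∀ e ∈ T, e + 1 ∉ T) : (∏ e ∈ T, (e : ℝ) / (e - 1)) ^ 2 ≤ 4 * #T + 1 := by
  induction T using Finset.induction_on_max with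
  | empty => simp
  | insert a s hlt ih =>
    have has : a ∉ s := fun h => (hlt a h).false
    have ha2 : (2 : ℝ) ≤ a := by exact_mod_cast h2 a (mem_insert_self a s)
    have hcard : 2 * ((#s : ℝ) + 1) ≤ a := by
      have := card_le_of_subset_Icc_of_add_one_notMem (insert a s) a
        (fun e he =>
          mem_Icc.mpr ⟨h2 e he, (mem_insert.mp he).elim le_of_eq (le_of_lt ∘ hlt e)⟩)
        hgap
      rw [card_insert_of_notMem has] at this
      exact_mod_cast (by omega : 2 * ((#s : ℤ) + 1) ≤ a)
    have ih' := ih (fun e he => h2 e (mem_insert_of_mem he))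
      (fun e he he' => hgap e (mem_insert_of_mem he) (mem_insert_of_mem he'))
    rw [prod_insert has, mul_pow, card_insert_of_notMem has, Nat.cast_succ]
    calc ((a : ℝ) / (a - 1)) ^ 2 * (∏ e ∈ s, (e : ℝ) / (e - 1)) ^ 2
        ≤ ((a : ℝ) / (a - 1)) ^ 2 * (4 * (#s : ℝ) + 1) := by gcongr
      _ ≤ 4 * ((#s : ℝ) + 1) + 1 := div_sub_one_sq_mul_le (by positivity) (by linarith)

lemma le_neg_one_or_two_le {e : ℤ} (h0 : e ≠ 0) (h1 : e ≠ 1) :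
    (e : ℝ) ≤ -1 ∨ 2 ≤ (e : ℝ) := by
  rcases (by omega : e ≤ -1 ∨ 2 ≤ e) with h | h
  exacts [.inl (by exact_mod_cast h), .inr (by exact_mod_cast h)]

lemma div_sub_one_nonneg {e : ℤ} (h0 : e ≠ 0) (h1 : e ≠ 1) : 0 ≤ (e : ℝ) / (e - 1) := by
  rcases le_neg_one_or_two_le h0 h1 with h | h
  exacts [div_nonneg_of_nonpos (by linarith) (by linarith), div_nonneg (by linarith) (by linarith)]

lemma prod_div_sub_one_le_sqrt (D : Finset ℤ) (h0 : 0 ∉ D) (h1 : 1 ∉ D)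
    (hgap : ∀ e ∈ D, e + 1 ∉ D) : ∏ e ∈ D, (e : ℝ) / (e - 1) ≤ √(4 * #D + 1) := by
  have hnonneg : ∀ e ∈ D, 0 ≤ (e : ℝ) / (e - 1) := fun e he =>
    div_sub_one_nonneg (ne_of_mem_of_not_mem he h0) (ne_of_mem_of_not_mem he h1)
  set T := D.filter (fun e => 2 ≤ e)
  -- the factors with `e ≤ -1` lie in `[0, 1]`
  have hdrop : ∏ e ∈ D, (e : ℝ) / (e - 1) ≤ ∏ e ∈ T, (e : ℝ) / (e - 1) := by
    refine prod_le_prod_of_subset_of_le_one (filter_subset _ _) hnonneg fun e he heT => ?_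
    rcases le_neg_one_or_two_le (ne_of_mem_of_not_mem he h0) (ne_of_mem_of_not_mem he h1)
      with h | h
    · rw [div_le_one_of_neg (by linarith)]
      linarith
    · exact absurd (mem_filter.mpr ⟨he, by exact_mod_cast h⟩) heT
  have hT := prod_div_sub_one_sq_le T (fun e he => (mem_filter.mp he).2)
    (fun e he he' => hgap e (mem_filter.mp he).1 (mem_filter.mp he').1)
  calc ∏ e ∈ D, (e : ℝ) / (e - 1) ≤ ∏ e ∈ T, (e : ℝ) / (e - 1) := hdrop
    _ ≤ √(4 * #T + 1) := (Real.le_sqrt (prod_nonneg fun e he => hnonneg e (mem_filter.mp he).1)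
        (by positivity)).mpr hT
    _ ≤ √(4 * #D + 1) := by gcongr; exact filter_subset _ _

lemma prod_mul_sub_one_pos (D : Finset ℤ) (h0 : 0 ∉ D) (h1 : 1 ∉ D) :
    0 < ∏ e ∈ D, (e : ℝ) * (e - 1) := prod_pos fun e he => by
  rcases le_neg_one_or_two_le (ne_of_mem_of_not_mem he h0) (ne_of_mem_of_not_mem he h1) with h | h
  <;> nlinarith

lemma prod_sq_le_sqrt_mul_prod (D : Finset ℤ) (h0 : 0 ∉ D) (h1 : 1 ∉ D)
    (hgap : ∀ e ∈ D, e + 1 ∉ D) :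
    ∏ e ∈ D, (e : ℝ) ^ 2 ≤ √(4 * #D + 1) * ∏ e ∈ D, (e : ℝ) * (e - 1) := by
  have hsplit : ∏ e ∈ D, (e : ℝ) ^ 2
      = (∏ e ∈ D, (e : ℝ) / (e - 1)) * ∏ e ∈ D, (e : ℝ) * (e - 1) := by
    rw [← prod_mul_distrib]
    refine prod_congr rfl fun e he => ?_
    have : (e : ℝ) - 1 ≠ 0 := sub_ne_zero.mpr (by exact_mod_cast ne_of_mem_of_not_mem he h1)
    field_simp
  rw [hsplit]
  exact mul_le_mul_of_nonneg_right (prod_div_sub_one_le_sqrt D h0 h1 hgap)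
    (prod_mul_sub_one_pos D h0 h1).le

theorem stmt3_general (k : ℕ) (hk : 0 < k)
    (a : Fin (k / 2) → ℕ) (hinj : Function.Injective a)
    (hadj : ∀ i j, i ≠ j → a i ≠ a j + 1)
    (x : ℕ)
    (hfx : (∏ i, ((x : ℝ) - (a i : ℝ)) * ((x : ℝ) - (a i : ℝ) - 1)) ≠ 0) :
    (∏ i, ((x : ℝ) - (a i : ℝ)) ^ 2) ≤
      2 * Real.sqrt k * ∏ i, ((x : ℝ) - (a i : ℝ)) * ((x : ℝ) - (a i : ℝ) - 1) := by
  set d : Fin (k / 2) → ℤ := fun i => (x : ℤ) - a i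
  have hd_inj : Function.Injective d := fun i j h => hinj (by simpa [d] using h)
  have hprod (F : ℤ → ℝ) : ∏ i, F (d i) = ∏ e ∈ univ.image d, F e :=
    (prod_image fun i _ j _ h => hd_inj h).symm
  have hcast (i) : (x : ℝ) - a i = (d i : ℝ) := by push_cast [d]; ring
  simp only [hcast, hprod (fun e => (e : ℝ) ^ 2), hprod (fun e => (e : ℝ) * (e - 1))] at hfx ⊢
  set D := univ.image d with hD
  obtain ⟨h0, h1⟩ : 0 ∉ D ∧ 1 ∉ D := by
    simp only [prod_ne_zero_iff, mul_ne_zero_iff, sub_ne_zero] at hfx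
    exact ⟨fun h => (hfx 0 h).1 (by simp), fun h => (hfx 1 h).2 (by simp)⟩
  have hgap : ∀ e ∈ D, e + 1 ∉ D := by
    simp only [hD, mem_image, mem_univ, true_and, not_exists, forall_exists_index,
      forall_apply_eq_imp_iff]
    intro i j hconsec
    simp only [d] at hconsec
    have := hadj i j (fun h => by subst h; omega)
    omega
  have hsqrt : √(4 * (#D : ℝ) + 1) ≤ 2 * √k := by
    rw [hD, card_image_of_injective _ hd_inj, card_univ, Fintype.card_fin, Real.sqrt_le_iff,
      mul_pow, Real.sq_sqrt (Nat.cast_nonneg k)]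
    exact ⟨by positivity, by exact_mod_cast (by omega : 4 * (k / 2) + 1 ≤ 4 * k)⟩
  calc ∏ e ∈ D, (e : ℝ) ^ 2
      ≤ √(4 * #D + 1) * ∏ e ∈ D, (e : ℝ) * (e - 1) :=
        prod_sq_le_sqrt_mul_prod _ h0 h1 hgap
    _ ≤ 2 * √k * ∏ e ∈ D, (e : ℝ) * (e - 1) :=
        mul_le_mul_of_nonneg_right hsqrt (prod_mul_sub_one_pos _ h0 h1).le

theorem stmt3 (n k : ℕ) (hn : 0 < n) (hk : 0 < k) (hke : Even k)
    (a : Fin (k / 2) → ℕ) (ha : ∀ i, a i < n) (hinj : Function.Injective a)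
    (hadj : ∀ i j, i ≠ j → a i ≠ a j + 1)
    (x : ℕ) (hx : x ≤ n)
    (hfx : (∏ i, ((x : ℝ) - (a i : ℝ)) * ((x : ℝ) - (a i : ℝ) - 1)) ≠ 0) :
    (∏ i, ((x : ℝ) - (a i : ℝ)) ^ 2) ≤
      2 * Real.sqrt k * ∏ i, ((x : ℝ) - (a i : ℝ)) * ((x : ℝ) - (a i : ℝ) - 1) :=
  stmt3_general k hk a hinj hadj x hfx
end

section
/- Let M be a positive integer and let G be a monic real polynomial of degree d with 0 ≤ d ≤ M/2. Then max over i in {0, 1, ..., M-1} of |G(i)| is at least M^d · 4^{-(d+1/2)} · exp(-d^3/M^2). -/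
/-!
Let `F(x) = x(x-1)⋯(x-d+1) · (x-M)(x-M-1)⋯(x-M-d+1)` and let `p = Δ^d F` be the discrete
Chebyshev polynomial of degree `d` on `{0, …, M-1}` (discrete Rodrigues formula). Since `F`
vanishes at `0, …, d-1` and at `M, …, M+d-1`, summing by parts `d` times has no boundary terms:
`∑_{x<M} p(x) g(x) = (-1)^d ∑_{x<M} F(x+d) Δ^d g(x)`. For `g = G` monic of degree `d` this is
`d! S`, for `g = p` it is `(2d)! S`, where `S = d!² C(M+d, 2d+1)` by the upper Chu–Vandermonde
identity, so Cauchy–Schwarz gives `∑_{x<M} G(x)² ≥ C(2d,d)⁻² M(M²-1)⋯(M²-d²)/(2d+1)`. For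
`k ≤ M/2`, `M² - k² ≥ M² exp(-2k²/M²)`, and `C(2d,d)² (2d+1) ≤ 16^d`; so the mean of `G(x)²`
is at least the square of the claimed bound, which some `|G(x)|` must therefore reach.
-/

open Finset Polynomial fwdDiff

theorem fwdDiff_iter_eq_zero_of_forall_le {M G : Type*} [AddCommMonoid M] [AddCommGroup G]
    {h : M} {f : M → G} {n : ℕ} {y : M} (hf : ∀ k ≤ n, f (y + k • h) = 0) :
    Δ_[h] ^[n] f y = 0 := by
  rw [fwdDiff_iter_eq_sum_shift]
  exact sum_eq_zero fun k hk => by rw [hf k (Nat.lt_succ_iff.1 (mem_range.1 hk)), smul_zero]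

section SummationByParts

variable {R : Type*} [CommRing R]

theorem sum_range_fwdDiff_mul_eq_neg {f : ℕ → R} (g : ℕ → R) {n : ℕ} (h0 : f 0 = 0)
    (hn : f n = 0) :
    ∑ x ∈ range n, Δ_[1] f x * g x = -∑ x ∈ range n, f (x + 1) * Δ_[1] g x := by
  have htel := sum_range_sub (fun x => f x * g x) n
  rw [h0, hn, zero_mul, zero_mul, sub_zero] at htel
  rw [eq_neg_iff_add_eq_zero, ← sum_add_distrib, ← htel]
  refine sum_congr rfl fun x _ => ?_
  simp only [fwdDiff]
  ring

theorem sum_range_fwdDiff_iter_mul {M d : ℕ} {F : ℕ → R}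
    (hF : ∀ x, x < d ∨ M ≤ x ∧ x < M + d → F x = 0) (g : ℕ → R) :
    ∑ x ∈ range M, Δ_[1] ^[d] F x * g x = (-1) ^ d * ∑ x ∈ range M, F (x + d) * Δ_[1] ^[d] g x := by
  induction d generalizing F g with
  | zero => simp
  | succ d ih =>
    have hvan : ∀ y, (∀ k ≤ d, F (y + k) = 0) → Δ_[1] ^[d] F y = 0 := fun y hy =>
      fwdDiff_iter_eq_zero_of_forall_le (by simpa using hy)
    rw [Function.iterate_succ_apply', sum_range_fwdDiff_mul_eq_neg _
      (hvan 0 fun k hk => hF _ (.inl (by omega))) (hvan M fun k hk => hF _ (.inr (by omega)))]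
    simp_rw [← fwdDiff_iter_comp_add]
    rw [ih (fun x hx => hF _ (by omega))]
    simp only [Function.iterate_succ_apply, add_assoc, pow_succ]
    ring

end SummationByParts

theorem fwdDiff_iter_comp_natCast {R G : Type*} [AddCommMonoidWithOne R] [AddCommGroup G]
    (f : R → G) (n y : ℕ) : Δ_[1] ^[n] (fun x : ℕ => f x) y = Δ_[1] ^[n] f y := by
  simp [fwdDiff_iter_eq_sum_shift]

theorem Polynomial.Monic.fwdDiff_iter_natDegree_eval_natCast {R : Type*} [CommRing R] {P : R[X]}
    (hP : P.Monic) (y : ℕ) :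
    Δ_[1] ^[P.natDegree] (fun x : ℕ => P.eval (x : R)) y = (P.natDegree.factorial : R) := by
  rw [fwdDiff_iter_comp_natCast P.eval, P.fwdDiff_iter_degree_eq_factorial]
  simp [hP.leadingCoeff]

theorem Nat.sum_range_add_choose_mul_choose (a b n : ℕ) :
    ∑ x ∈ range n, (x + a).choose a * (n - 1 - x).choose b = (n + a).choose (a + b + 1) := by
  induction n generalizing b with
  | zero => simp [Nat.choose_eq_zero_of_lt]
  | succ n ih =>
    simp only [Nat.add_sub_cancel]
    cases b with
    | zero =>
      simp only [Nat.choose_zero_right, mul_one, add_zero, Nat.sum_range_add_choose]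
      ring_nf
    | succ b =>
      have hpascal : ∀ x ∈ range n, (x + a).choose a * (n - x).choose (b + 1) =
          (x + a).choose a * (n - 1 - x).choose b +
            (x + a).choose a * (n - 1 - x).choose (b + 1) := by
        intro x hx
        rw [show n - x = n - 1 - x + 1 by have := mem_range.1 hx; omega, Nat.choose_succ_succ,
          mul_add]
      rw [sum_range_succ, Nat.sub_self, Nat.choose_zero_succ, mul_zero, add_zero,
        sum_congr rfl hpascal, sum_add_distrib, ih, ih, add_right_comm n 1 a,
        Nat.choose_succ_succ (n + a), add_assoc a b 1]

namespace discreteChebyshev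

noncomputable def rodrigues (M d : ℕ) : ℝ[X] :=
  descPochhammer ℝ d * (descPochhammer ℝ d).comp (X - C (M : ℝ))

variable (M d : ℕ)

theorem rodrigues_monic : (rodrigues M d).Monic :=
  (monic_descPochhammer ℝ d).mul ((monic_descPochhammer ℝ d).comp_X_sub_C _)

theorem rodrigues_natDegree : (rodrigues M d).natDegree = 2 * d := by
  rw [rodrigues, (monic_descPochhammer ℝ d).natDegree_mul
    ((monic_descPochhammer ℝ d).comp_X_sub_C _), natDegree_comp, descPochhammer_natDegree,
    natDegree_X_sub_C]
  ring

variable {M d}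

theorem rodrigues_eval_natCast_eq_zero {x : ℕ} (hx : x < d ∨ M ≤ x ∧ x < M + d) :
    (rodrigues M d).eval (x : ℝ) = 0 := by
  rw [rodrigues, eval_mul, eval_comp, eval_sub, eval_X, eval_C]
  rcases hx with hx | ⟨hMx, hx⟩
  · rw [descPochhammer_eval_coe_nat_of_lt hx, zero_mul]
  · rw [← Nat.cast_sub hMx, descPochhammer_eval_coe_nat_of_lt (k := x - M) (by omega), mul_zero]

theorem neg_one_pow_mul_rodrigues_eval {x : ℕ} (hx : x < M) :
    (-1) ^ d * (rodrigues M d).eval ((x + d : ℕ) : ℝ) =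
      ((x + d).descFactorial d * (M - 1 - x).descFactorial d : ℕ) := by
  have harg : -(((x + d : ℕ) : ℝ) - M) = ((M - 1 - x : ℕ) : ℝ) - d + 1 := by
    rw [Nat.sub_sub, Nat.cast_sub (by omega)]
    push_cast
    ring
  rw [rodrigues, eval_mul, eval_comp, eval_sub, eval_X, eval_C, mul_left_comm,
    ← ascPochhammer_eval_neg_eq_descPochhammer, harg, ← descPochhammer_eval_eq_ascPochhammer,
    descPochhammer_eval_eq_descFactorial, descPochhammer_eval_eq_descFactorial, Nat.cast_mul]

variable (M d)

theorem neg_one_pow_mul_sum_rodrigues_eval :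
    (-1) ^ d * ∑ x ∈ range M, (rodrigues M d).eval ((x + d : ℕ) : ℝ) =
      d.factorial ^ 2 * (M + d).choose (2 * d + 1) := by
  have hnat : ∑ x ∈ range M, (x + d).descFactorial d * (M - 1 - x).descFactorial d =
      d.factorial ^ 2 * (M + d).choose (2 * d + 1) := by
    simp_rw [Nat.descFactorial_eq_factorial_mul_choose]
    rw [two_mul, ← Nat.sum_range_add_choose_mul_choose, mul_sum]
    exact sum_congr rfl fun x _ => by ring
  rw [mul_sum, sum_congr rfl fun x hx => neg_one_pow_mul_rodrigues_eval (mem_range.1 hx)]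
  exact_mod_cast hnat

end discreteChebyshev

open discreteChebyshev in
noncomputable def discreteChebyshev (M d : ℕ) : ℕ → ℝ :=
  Δ_[1] ^[d] fun x : ℕ => (rodrigues M d).eval (x : ℝ)

section DiscreteChebyshev

open discreteChebyshev

variable {M d : ℕ}

theorem sum_discreteChebyshev_mul {g : ℕ → ℝ} {c : ℝ} (hg : ∀ x, Δ_[1] ^[d] g x = c) :
    ∑ x ∈ range M, discreteChebyshev M d x * g x =
      c * (d.factorial ^ 2 * (M + d).choose (2 * d + 1)) := by
  rw [discreteChebyshev, sum_range_fwdDiff_iter_mul fun x hx => rodrigues_eval_natCast_eq_zero hx,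
    ← neg_one_pow_mul_sum_rodrigues_eval]
  simp_rw [hg, ← sum_mul]
  ring

theorem sum_discreteChebyshev_mul_eval {G : ℝ[X]} (hG : G.Monic) (hdeg : G.natDegree = d) :
    ∑ x ∈ range M, discreteChebyshev M d x * G.eval (x : ℝ) =
      d.factorial * (d.factorial ^ 2 * (M + d).choose (2 * d + 1)) :=
  sum_discreteChebyshev_mul fun x => by simpa [hdeg] using hG.fwdDiff_iter_natDegree_eval_natCast x

variable (M d)

theorem sum_discreteChebyshev_sq :
    ∑ x ∈ range M, discreteChebyshev M d x ^ 2 =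
      (2 * d).factorial * (d.factorial ^ 2 * (M + d).choose (2 * d + 1)) := by
  refine (sum_congr rfl fun x _ => sq _).trans (sum_discreteChebyshev_mul fun x => ?_)
  rw [discreteChebyshev, ← Function.iterate_add_apply, ← two_mul, ← rodrigues_natDegree M d,
    (rodrigues_monic M d).fwdDiff_iter_natDegree_eval_natCast]

end DiscreteChebyshev

theorem factorial_pow_four_mul_choose_div_le_sum_sq_eval {M d : ℕ} (hdM : d < M) {G : ℝ[X]}
    (hG : G.Monic) (hdeg : G.natDegree = d) :
    (d.factorial : ℝ) ^ 4 * (M + d).choose (2 * d + 1) / (2 * d).factorial ≤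
      ∑ x ∈ range M, G.eval (x : ℝ) ^ 2 := by
  set S : ℝ := d.factorial ^ 2 * (M + d).choose (2 * d + 1)
  have hS : 0 < S := by
    have := Nat.choose_pos (show 2 * d + 1 ≤ M + d by omega)
    positivity
  have hcs := sum_mul_sq_le_sq_mul_sq (range M) (discreteChebyshev M d) fun x => G.eval (x : ℝ)
  rw [sum_discreteChebyshev_mul_eval hG hdeg, sum_discreteChebyshev_sq] at hcs
  rw [div_le_iff₀ (by positivity)]
  refine le_of_mul_le_mul_right ?_ hS
  calc (d.factorial : ℝ) ^ 4 * (M + d).choose (2 * d + 1) * S = (d.factorial * S) ^ 2 := by ring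
    _ ≤ _ := hcs
    _ = _ := by ring

theorem prod_range_two_mul_add_one_sub {R : Type*} [CommRing R] (m : R) (d : ℕ) :
    ∏ j ∈ range (2 * d + 1), (m + d - j) = m * ∏ k ∈ range d, (m ^ 2 - (k + 1) ^ 2) := by
  induction d with
  | zero => simp
  | succ d ih =>
    have hshift : ∀ j : ℕ, m + ((d + 1 : ℕ) : R) - ((j + 1 : ℕ) : R) = m + d - j := fun j => by
      push_cast
      ring
    rw [show 2 * (d + 1) + 1 = 2 * d + 1 + 1 + 1 by ring, prod_range_succ _ (2 * d + 1 + 1),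
      prod_range_succ', prod_congr rfl fun j _ => hshift j, ih, prod_range_succ _ d]
    push_cast
    ring

theorem le_sum_sq_eval_of_monic {M d : ℕ} (hdM : d < M) {G : ℝ[X]} (hG : G.Monic)
    (hdeg : G.natDegree = d) :
    (M : ℝ) * (∏ k ∈ range d, ((M : ℝ) ^ 2 - (k + 1) ^ 2)) / (d.centralBinom ^ 2 * (2 * d + 1)) ≤
      ∑ x ∈ range M, G.eval (x : ℝ) ^ 2 := by
  refine le_of_eq_of_le ?_ (factorial_pow_four_mul_choose_div_le_sum_sq_eval hdM hG hdeg)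
  have hdesc : ((M + d).choose (2 * d + 1) : ℝ) * (2 * d + 1).factorial =
      M * ∏ k ∈ range d, ((M : ℝ) ^ 2 - (k + 1) ^ 2) := by
    rw [← prod_range_two_mul_add_one_sub, ← Nat.cast_add, ← descPochhammer_eval_eq_prod_range,
      descPochhammer_eval_eq_descFactorial, Nat.descFactorial_eq_factorial_mul_choose]
    push_cast
    ring
  have hcentral : ((2 * d).factorial : ℝ) = d.centralBinom * d.factorial ^ 2 := by
    rw [← Nat.choose_mul_factorial_mul_factorial (show d ≤ 2 * d by omega),
      show 2 * d - d = d by omega, Nat.centralBinom_eq_two_mul_choose]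
    push_cast
    ring
  rw [← hdesc, Nat.factorial_succ, Nat.cast_mul, hcentral]
  have : (0 : ℝ) < d.centralBinom := by exact_mod_cast d.centralBinom_pos
  field_simp
  push_cast
  ring

theorem Real.exp_neg_two_mul_le_one_sub {t : ℝ} (h0 : 0 ≤ t) (h1 : t ≤ 1 / 2) :
    Real.exp (-(2 * t)) ≤ 1 - t := by
  rw [Real.exp_neg, inv_le_iff_one_le_mul₀' (Real.exp_pos _)]
  nlinarith [mul_nonneg (sub_nonneg.2 (Real.add_one_le_exp (2 * t))) (by linarith : 0 ≤ 1 - t)]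

theorem pow_mul_exp_le_prod_sq_sub_sq {m : ℝ} {d : ℕ} (hd : 2 * (d : ℝ) ≤ m) :
    m ^ (2 * d) * Real.exp (-(2 * d ^ 3) / m ^ 2) ≤ ∏ k ∈ range d, (m ^ 2 - (k + 1) ^ 2) := by
  have hsq : ∑ k ∈ range d, ((k : ℝ) + 1) ^ 2 ≤ (d : ℝ) ^ 3 := by
    calc ∑ k ∈ range d, ((k : ℝ) + 1) ^ 2 ≤ ∑ _k ∈ range d, (d : ℝ) ^ 2 := by
          refine sum_le_sum fun k hk => ?_
          have : (k : ℝ) + 1 ≤ d := by exact_mod_cast mem_range.1 hk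
          gcongr
      _ = d ^ 3 := by simp; ring
  calc m ^ (2 * d) * Real.exp (-(2 * d ^ 3) / m ^ 2)
      ≤ ∏ k ∈ range d, (m ^ 2 * Real.exp (-(2 * ((k + 1) ^ 2 / m ^ 2)))) := by
        rw [prod_mul_distrib, prod_const, card_range, ← Real.exp_sum, pow_mul]
        gcongr
        rw [sum_neg_distrib, ← mul_sum, ← sum_div, ← mul_div_assoc, ← neg_div]
        gcongr
    _ ≤ ∏ k ∈ range d, (m ^ 2 - (k + 1) ^ 2) := by
        refine prod_le_prod (fun _ _ => by positivity) fun k hk => ?_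
        have hk : (k : ℝ) + 1 ≤ d := by exact_mod_cast mem_range.1 hk
        have hm : 0 < m := by linarith
        calc m ^ 2 * Real.exp (-(2 * ((k + 1) ^ 2 / m ^ 2)))
            ≤ m ^ 2 * (1 - (k + 1) ^ 2 / m ^ 2) := by
              gcongr
              refine Real.exp_neg_two_mul_le_one_sub (by positivity) ?_
              rw [div_le_iff₀ (by positivity)]
              nlinarith
          _ = m ^ 2 - (k + 1) ^ 2 := by field_simp

theorem Nat.centralBinom_sq_mul_le (d : ℕ) : d.centralBinom ^ 2 * (2 * d + 1) ≤ 16 ^ d := by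
  induction d with
  | zero => simp
  | succ d ih =>
    refine Nat.le_of_mul_le_mul_left ?_ (show 0 < (d + 1) ^ 2 by positivity)
    calc (d + 1) ^ 2 * ((d + 1).centralBinom ^ 2 * (2 * (d + 1) + 1))
        = ((d + 1) * (d + 1).centralBinom) ^ 2 * (2 * d + 3) := by ring
      _ = (4 * (2 * d + 1) * (2 * d + 3)) * (d.centralBinom ^ 2 * (2 * d + 1)) := by
        rw [Nat.succ_mul_centralBinom_succ]; ring
      _ ≤ (4 * (2 * d + 1) * (2 * d + 3)) * 16 ^ d := Nat.mul_le_mul_left _ ih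
      _ ≤ (16 * (d + 1) ^ 2) * 16 ^ d := Nat.mul_le_mul_right _ (by nlinarith)
      _ = (d + 1) ^ 2 * 16 ^ (d + 1) := by ring

theorem four_rpow_natCast_add_half (d : ℕ) : (4 : ℝ) ^ ((d : ℝ) + 1 / 2) = 2 * 4 ^ d := by
  rw [Real.rpow_add (by norm_num), Real.rpow_natCast, show (4 : ℝ) = 2 ^ (2 : ℝ) by norm_num,
    ← Real.rpow_mul (by norm_num)]
  norm_num
  ring

theorem sq_pow_div_four_rpow_mul_exp (m : ℝ) (d : ℕ) :
    (m ^ d / (4 : ℝ) ^ ((d : ℝ) + 1 / 2) * Real.exp (-(d : ℝ) ^ 3 / m ^ 2)) ^ 2 =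
      m ^ (2 * d) * Real.exp (-(2 * d ^ 3) / m ^ 2) / (4 * 16 ^ d) := by
  rw [four_rpow_natCast_add_half, div_mul_eq_mul_div, div_pow, mul_pow, mul_pow,
    ← Real.exp_nat_mul, ← pow_mul, ← pow_mul, pow_mul' 4 d 2]
  ring_nf

theorem pow_mul_exp_div_le_prod_div_centralBinom {m : ℝ} {d : ℕ} (hd : 2 * (d : ℝ) ≤ m) :
    m ^ (2 * d) * Real.exp (-(2 * d ^ 3) / m ^ 2) / (4 * 16 ^ d) ≤
      (∏ k ∈ range d, (m ^ 2 - (k + 1) ^ 2)) / (d.centralBinom ^ 2 * (2 * d + 1)) := by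
  have hprod := pow_mul_exp_le_prod_sq_sub_sq hd
  have hm : 0 ≤ m := le_trans (by positivity) hd
  have hprod_nonneg : 0 ≤ ∏ k ∈ range d, (m ^ 2 - (k + 1) ^ 2) :=
    (by positivity : (0 : ℝ) ≤ _).trans hprod
  have hcentral : (d.centralBinom ^ 2 * (2 * d + 1) : ℝ) ≤ 16 ^ d := by
    exact_mod_cast d.centralBinom_sq_mul_le
  have hcentral_pos : (0 : ℝ) < d.centralBinom := by exact_mod_cast d.centralBinom_pos
  calc m ^ (2 * d) * Real.exp (-(2 * d ^ 3) / m ^ 2) / (4 * 16 ^ d)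
      ≤ (∏ k ∈ range d, (m ^ 2 - (k + 1) ^ 2)) / 16 ^ d := by
        gcongr
        linarith [pow_pos (show (0 : ℝ) < 16 by norm_num) d]
    _ ≤ _ := by gcongr

theorem stmt4 (M : ℕ) (hM : 0 < M) (G : Polynomial ℝ) (d : ℕ)
    (hmonic : G.Monic) (hdeg : G.natDegree = d) (hd : 2 * d ≤ M) :
    ∃ i ∈ Finset.range M,
      (M : ℝ) ^ d / (4 : ℝ) ^ ((d : ℝ) + 1 / 2) * Real.exp (-(d : ℝ) ^ 3 / (M : ℝ) ^ 2) ≤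
        |G.eval (i : ℝ)| := by
  set r := (M : ℝ) ^ d / (4 : ℝ) ^ ((d : ℝ) + 1 / 2) * Real.exp (-(d : ℝ) ^ 3 / (M : ℝ) ^ 2)
    with hr
  have hmean : ∑ _x ∈ range M, r ^ 2 ≤ ∑ x ∈ range M, G.eval (x : ℝ) ^ 2 :=
    calc ∑ _x ∈ range M, r ^ 2
        = M * ((M : ℝ) ^ (2 * d) * Real.exp (-(2 * d ^ 3) / (M : ℝ) ^ 2) / (4 * 16 ^ d)) := by
          rw [sum_const, card_range, nsmul_eq_mul, hr, sq_pow_div_four_rpow_mul_exp]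
      _ ≤ M * ((∏ k ∈ range d, ((M : ℝ) ^ 2 - (k + 1) ^ 2)) /
            (d.centralBinom ^ 2 * (2 * d + 1))) :=
          mul_le_mul_of_nonneg_left
            (pow_mul_exp_div_le_prod_div_centralBinom (by exact_mod_cast hd)) M.cast_nonneg
      _ ≤ _ := (mul_div_assoc ..).symm.trans_le (le_sum_sq_eval_of_monic (by omega) hmonic hdeg)
  obtain ⟨i, hi, hle⟩ := exists_le_of_sum_le (nonempty_range_iff.2 hM.ne') hmean
  exact ⟨i, hi, (le_abs_self r).trans (sq_le_sq.1 hle)⟩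
end

section
/- Let n be a positive integer, 0 < p < 1, N = np(1-p) - 1 > 0, μ = ⌊pn⌋, and let ℓ be an integer with 1 ≤ ℓ ≤ (n-μ)/2. Then P(X = μ) ≤ exp(3ℓ²/(2N)) · P(X = μ + ℓ), where X ~ Bin(n,p). -/
/-!
Writing `b k` for the binomial mass, `b k · (n - k) p = b (k + 1) · (k + 1)(1 - p)`, so a step to the
right from `k ≥ μ` costs at most a factor `1 + (k + 1 - np) / ((n - k) p) ≤ exp ((k - μ + 1) / ((n - k) p))`.
Multiplying the `ℓ` steps from `μ` to `μ + ℓ`, all of whose denominators are at least `(n - μ - ℓ + 1) p`,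
gives a total exponent `ℓ (ℓ + 1) / (2 (n - μ - ℓ + 1) p)`, which is at most `ℓ² / ((n - μ) p) ≤ ℓ² / (np(1 - p))`
as long as `2ℓ ≤ n - μ`.
-/

open Real Finset

noncomputable def binomPMF (n : ℕ) (p : ℝ) (k : ℕ) : ℝ :=
  n.choose k * p ^ k * (1 - p) ^ (n - k)

lemma binomPMF_nonneg (n k : ℕ) {p : ℝ} (hp0 : 0 ≤ p) (hp1 : p ≤ 1) : 0 ≤ binomPMF n p k := by
  have : 0 ≤ 1 - p := by linarith
  unfold binomPMF
  positivity

lemma binomPMF_succ_mul {n k : ℕ} (p : ℝ) (hk : k < n) :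
    binomPMF n p (k + 1) * ((k + 1) * (1 - p)) = binomPMF n p k * ((n - k) * p) := by
  have hchoose : (n.choose (k + 1) : ℝ) * (k + 1) = n.choose k * (n - k) := by
    have h := congrArg (Nat.cast : ℕ → ℝ) (Nat.choose_succ_right_eq n k)
    push_cast [Nat.cast_sub hk.le] at h
    exact h
  have hpow : (1 - p) ^ (n - k) = (1 - p) ^ (n - (k + 1)) * (1 - p) := by
    rw [← pow_succ]; congr 1; omega
  unfold binomPMF
  rw [hpow, pow_succ]
  linear_combination p ^ k * p * (1 - p) ^ (n - (k + 1)) * (1 - p) * hchoose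

lemma binomPMF_le_exp_mul_succ {n k : ℕ} {p : ℝ} (hp0 : 0 < p) (hp1 : p ≤ 1) (hk : k < n) :
    binomPMF n p k ≤ exp ((k + 1 - n * p) / ((n - k) * p)) * binomPMF n p (k + 1) := by
  have hk' : (k : ℝ) < n := by exact_mod_cast hk
  set den : ℝ := (n - k) * p
  have hden : 0 < den := mul_pos (by linarith) hp0
  have hstep : (k + 1) * (1 - p) ≤ exp ((k + 1 - n * p) / den) * den := by
    calc (k + 1) * (1 - p) ≤ (1 + (k + 1 - n * p) / den) * den := by
          rw [add_mul _ _ den, one_mul, div_mul_cancel₀ _ hden.ne']; unfold den; linarith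
      _ ≤ exp ((k + 1 - n * p) / den) * den := by
          gcongr; linarith [add_one_le_exp ((k + 1 - n * p) / den)]
  refine le_of_mul_le_mul_right ?_ hden
  calc binomPMF n p k * den = binomPMF n p (k + 1) * ((k + 1) * (1 - p)) :=
        (binomPMF_succ_mul p hk).symm
    _ ≤ binomPMF n p (k + 1) * (exp ((k + 1 - n * p) / den) * den) :=
        mul_le_mul_of_nonneg_left hstep (binomPMF_nonneg n (k + 1) hp0.le hp1)
    _ = _ := by ring

lemma le_exp_sum_mul_of_le_exp_mul_succ {f a : ℕ → ℝ} {m : ℕ} :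
    ∀ {ℓ : ℕ}, (∀ j < ℓ, f (m + j) ≤ exp (a j) * f (m + j + 1)) →
      f m ≤ exp (∑ j ∈ range ℓ, a j) * f (m + ℓ)
  | 0, _ => by simp
  | ℓ + 1, h => by
    calc f m ≤ exp (∑ j ∈ range ℓ, a j) * f (m + ℓ) :=
          le_exp_sum_mul_of_le_exp_mul_succ fun j hj => h j (by omega)
      _ ≤ exp (∑ j ∈ range ℓ, a j) * (exp (a ℓ) * f (m + ℓ + 1)) := by
          gcongr; exact h ℓ (by omega)
      _ = exp (∑ j ∈ range (ℓ + 1), a j) * f (m + (ℓ + 1)) := by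
          rw [sum_range_succ, exp_add, ← add_assoc]; ring

lemma sum_range_add_one_div (ℓ : ℕ) (D : ℝ) :
    ∑ j ∈ range ℓ, ((j : ℝ) + 1) / D = ℓ * (ℓ + 1) / (2 * D) := by
  induction ℓ with
  | zero => simp
  | succ ℓ ih => rw [sum_range_succ, ih]; push_cast; field_simp; ring

lemma triangular_div_le_sq_div (ℓ : ℕ) {m : ℝ} (hm : 0 < m) (hℓm : 2 * ℓ ≤ m) :
    ℓ * (ℓ + 1) / (2 * (m - ℓ + 1)) ≤ ℓ ^ 2 / m := by
  rcases Nat.eq_zero_or_pos ℓ with rfl | hℓpos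
  · simp
  have hℓ : (1 : ℝ) ≤ ℓ := by exact_mod_cast hℓpos
  rw [div_le_div_iff₀ (by linarith) hm]
  nlinarith [mul_nonneg (mul_nonneg (by linarith : (0 : ℝ) ≤ ℓ) (sub_nonneg.2 hℓ))
    (sub_nonneg.2 hℓm)]

lemma binomPMF_add_le_exp_mul_succ {n μ j ℓ : ℕ} {p : ℝ} (hp0 : 0 < p) (hp1 : p ≤ 1)
    (hμ : (μ : ℝ) ≤ p * n) (hj : j < ℓ) (hℓ : 2 * (ℓ : ℝ) ≤ n - μ) :
    binomPMF n p (μ + j) ≤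
      exp ((j + 1) / ((n - μ - ℓ + 1) * p)) * binomPMF n p (μ + j + 1) := by
  have hj' : (j : ℝ) + 1 ≤ ℓ := by exact_mod_cast hj
  have hk : μ + j < n := by
    have : ((μ + j + 1 : ℕ) : ℝ) ≤ n := by push_cast; linarith
    exact_mod_cast this
  refine (binomPMF_le_exp_mul_succ hp0 hp1 hk).trans ?_
  refine mul_le_mul_of_nonneg_right (exp_le_exp.2 ?_) (binomPMF_nonneg n _ hp0.le hp1)
  push_cast
  exact div_le_div₀ (by positivity) (by linarith) (mul_pos (by linarith) hp0)
    (mul_le_mul_of_nonneg_right (by linarith) hp0.le)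

lemma triangular_div_le_three_sq_div_variance {n μ ℓ : ℕ} {p : ℝ} (hp0 : 0 < p)
    (hN : 0 < (n : ℝ) * p * (1 - p) - 1) (hμ : (μ : ℝ) ≤ p * n) (hℓ : 2 * (ℓ : ℝ) ≤ n - μ) :
    ℓ * (ℓ + 1) / (2 * ((n - μ - ℓ + 1) * p)) ≤
      3 * (ℓ : ℝ) ^ 2 / (2 * ((n : ℝ) * p * (1 - p) - 1)) := by
  have hvariance : (n : ℝ) * p * (1 - p) ≤ (n - μ) * p := by nlinarith
  calc ℓ * (ℓ + 1) / (2 * ((n - μ - ℓ + 1) * p)) = ℓ * (ℓ + 1) / (2 * (n - μ - ℓ + 1)) / p := by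
        rw [div_div, mul_assoc]
    _ ≤ ℓ ^ 2 / (n - μ) / p :=
        div_le_div_of_nonneg_right (triangular_div_le_sq_div ℓ (by nlinarith) hℓ) hp0.le
    _ = ℓ ^ 2 / ((n - μ) * p) := div_div _ _ _
    _ ≤ ℓ ^ 2 / ((n : ℝ) * p * (1 - p) - 1) := by gcongr; linarith
    _ ≤ 3 * (ℓ : ℝ) ^ 2 / (2 * ((n : ℝ) * p * (1 - p) - 1)) := by
        rw [mul_div_mul_comm]
        exact le_mul_of_one_le_left (by positivity) (by norm_num)

theorem stmt7_general (n : ℕ) (p : ℝ) (hp0 : 0 < p) (hp1 : p < 1)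
    (hN : 0 < (n : ℝ) * p * (1 - p) - 1)
    (ℓ : ℕ)
    (hℓ : (ℓ : ℝ) ≤ ((n : ℝ) - (⌊p * n⌋₊ : ℝ)) / 2) :
    (n.choose ⌊p * n⌋₊ : ℝ) * p ^ ⌊p * n⌋₊ * (1 - p) ^ (n - ⌊p * n⌋₊) ≤
      Real.exp (3 * (ℓ : ℝ) ^ 2 / (2 * ((n : ℝ) * p * (1 - p) - 1))) *
        ((n.choose (⌊p * n⌋₊ + ℓ) : ℝ) * p ^ (⌊p * n⌋₊ + ℓ) * (1 - p) ^ (n - (⌊p * n⌋₊ + ℓ))) := by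
  set μ := ⌊p * n⌋₊
  have hμ : (μ : ℝ) ≤ p * n := Nat.floor_le (by positivity)
  have hgap : 2 * (ℓ : ℝ) ≤ n - μ := by linarith
  calc binomPMF n p μ
      ≤ exp (∑ j ∈ range ℓ, ((j : ℝ) + 1) / ((n - μ - ℓ + 1) * p)) * binomPMF n p (μ + ℓ) :=
        le_exp_sum_mul_of_le_exp_mul_succ fun j hj =>
          binomPMF_add_le_exp_mul_succ hp0 hp1.le hμ hj hgap
    _ ≤ exp (3 * (ℓ : ℝ) ^ 2 / (2 * ((n : ℝ) * p * (1 - p) - 1))) * binomPMF n p (μ + ℓ) := by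
        rw [sum_range_add_one_div]
        exact mul_le_mul_of_nonneg_right
          (exp_le_exp.2 (triangular_div_le_three_sq_div_variance hp0 hN hμ hgap))
          (binomPMF_nonneg n _ hp0.le hp1.le)

theorem stmt7 (n : ℕ) (hn : 0 < n) (p : ℝ) (hp0 : 0 < p) (hp1 : p < 1)
    (hN : 0 < (n : ℝ) * p * (1 - p) - 1)
    (ℓ : ℕ) (hℓ1 : 1 ≤ ℓ)
    (hℓ : (ℓ : ℝ) ≤ ((n : ℝ) - (⌊p * n⌋₊ : ℝ)) / 2) :
    (n.choose ⌊p * n⌋₊ : ℝ) * p ^ ⌊p * n⌋₊ * (1 - p) ^ (n - ⌊p * n⌋₊) ≤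
      Real.exp (3 * (ℓ : ℝ) ^ 2 / (2 * ((n : ℝ) * p * (1 - p) - 1))) *
        ((n.choose (⌊p * n⌋₊ + ℓ) : ℝ) * p ^ (⌊p * n⌋₊ + ℓ) * (1 - p) ^ (n - (⌊p * n⌋₊ + ℓ))) :=
  stmt7_general n p hp0 hp1 hN ℓ hℓ
end

section
/- Let n, k be positive integers with k even, 0 < p < 1, and suppose that for all integers 0 ≤ i < k/2 one has binom(n,i) p^{n-i} (1-p)^i ≤ (1/2) binom(n, i+1) p^{n-i-1} (1-p)^{i+1}. Then c√k (pk/(2e(1-p)n))^{k/2} ≤ p^n / P(Bin(n,1-p) ≤ k/2) ≤ C√k (pk/(2e(1-p)n))^{k/2} e^{k²/(2n)}, for universal constants c, C > 0 (and assuming k ≤ C'n(1-p) for a suitable C'). -/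
/-!
Write `m = k / 2`. The hypothesis says that the terms of the lower tail
`∑_{i ≤ m} binom(n,i) (1-p)^i p^(n-i)` at least double from one index to the next, so the
tail lies between its last term and twice that term, and `p^n` divided by the last term is
`(p / (1-p))^m / binom(n,m)`. The Stirling bounds `√(2m) (m/e)^m ≤ m! ≤ e √m (m/e)^m`,
together with `(n-m)^m ≤ m! binom(n,m) ≤ n^m` and `n^m e^(-2m²/n) ≤ (n-m)^m` for `2m ≤ n`
(guaranteed by `k ≤ n (1-p)`), then give both bounds with `c = 1/2`, `C = e`, `C' = 1`.
-/

open Finset Real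
open scoped Nat

theorem Finset.sum_range_succ_add_le_two_mul_of_le_half {f : ℕ → ℝ} {m : ℕ}
    (hf : ∀ i < m, f i ≤ 1 / 2 * f (i + 1)) :
    ∑ i ∈ range (m + 1), f i + f 0 ≤ 2 * f m := by
  induction m with
  | zero => simp; linarith
  | succ m ih =>
    rw [sum_range_succ]
    linarith [ih fun i hi => hf i (by omega), hf m (by omega)]

theorem Real.exp_neg_two_mul_le_one_sub_s11 {x : ℝ} (hx0 : 0 ≤ x) (hx : x ≤ 1 / 2) :
    exp (-(2 * x)) ≤ 1 - x := by
  rw [exp_neg, inv_le_iff_one_le_mul₀ (exp_pos _)]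
  nlinarith [add_one_le_exp (2 * x)]

theorem exp_neg_mul_pow_le_sub_pow {n m : ℕ} (hmn : 2 * m ≤ n) :
    exp (-(2 * m ^ 2 / n)) * (n : ℝ) ^ m ≤ ((n : ℝ) - m) ^ m := by
  rcases Nat.eq_zero_or_pos n with rfl | hn
  · simp_all
  have hn' : (0 : ℝ) < n := by exact_mod_cast hn
  have hmn' : (2 * m : ℝ) ≤ n := by exact_mod_cast hmn
  calc exp (-(2 * m ^ 2 / n)) * (n : ℝ) ^ m = (exp (-(2 * (m / n))) * n) ^ m := by
        rw [mul_pow, ← exp_nat_mul]; congr 2; field_simp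
    _ ≤ ((1 - m / n) * n) ^ m := by
        gcongr
        exact exp_neg_two_mul_le_one_sub_s11 (by positivity) (by rw [div_le_iff₀ hn']; linarith)
    _ = ((n : ℝ) - m) ^ m := by congr 1; field_simp

theorem Stirling.factorial_le_exp_one_mul_sqrt_mul {n : ℕ} (hn : n ≠ 0) :
    (n ! : ℝ) ≤ exp 1 * √n * (n / exp 1) ^ n := by
  have h : stirlingSeq n ≤ exp 1 / √2 := by
    obtain ⟨j, rfl⟩ := Nat.exists_eq_succ_of_ne_zero hn
    exact stirlingSeq_one ▸ stirlingSeq'_antitone (Nat.zero_le j)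
  rw [stirlingSeq, div_le_iff₀ (by positivity), sqrt_mul zero_le_two] at h
  calc (n ! : ℝ) ≤ exp 1 / √2 * (√2 * √n * (n / exp 1) ^ n) := h
    _ = exp 1 * √n * (n / exp 1) ^ n := by field_simp

theorem Nat.choose_mul_sqrt_two_mul_le_pow (n m : ℕ) :
    (n.choose m : ℝ) * (√(2 * m) * (m / exp 1) ^ m) ≤ (n : ℝ) ^ m := by
  have hstir : √(2 * m) * (m / exp 1) ^ m ≤ (m ! : ℝ) := by
    refine le_trans ?_ (Stirling.le_factorial_stirling m)
    gcongr
    nlinarith [pi_gt_three, (Nat.cast_nonneg m : (0 : ℝ) ≤ m)]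
  calc (n.choose m : ℝ) * (√(2 * m) * (m / exp 1) ^ m) ≤ n.choose m * m ! := by gcongr
    _ ≤ (n : ℝ) ^ m := by
        rw [← le_div_iff₀ (by positivity)]; exact Nat.choose_le_pow_div m n

theorem Nat.sub_pow_le_exp_one_mul_choose_mul {n m : ℕ} (hm : m ≠ 0) (hmn : m ≤ n) :
    ((n : ℝ) - m) ^ m ≤ exp 1 * n.choose m * (√m * (m / exp 1) ^ m) := by
  have hsub : ((n : ℝ) - m) ^ m ≤ ((n + 1 - m : ℕ) : ℝ) ^ m := by
    gcongr
    · exact sub_nonneg.mpr (by exact_mod_cast hmn)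
    · rw [Nat.cast_sub (by omega)]; push_cast; linarith
  calc ((n : ℝ) - m) ^ m ≤ n.choose m * m ! := by
        refine hsub.trans ?_
        rw [← div_le_iff₀ (by positivity)]; exact Nat.pow_le_choose m n
    _ ≤ n.choose m * (exp 1 * √m * (m / exp 1) ^ m) := by
        gcongr; exact Stirling.factorial_le_exp_one_mul_sqrt_mul hm
    _ = exp 1 * n.choose m * (√m * (m / exp 1) ^ m) := by ring

def binomMass (n : ℕ) (p : ℝ) (i : ℕ) : ℝ := n.choose i * (1 - p) ^ i * p ^ (n - i)

section BinomialTail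

variable {n m : ℕ} {p : ℝ}

theorem binomMass_nonneg (hp : 0 < p) (hp1 : p < 1) (i : ℕ) : 0 ≤ binomMass n p i := by
  have : 0 < 1 - p := by linarith
  unfold binomMass; positivity

theorem binomMass_pos (hp : 0 < p) (hp1 : p < 1) (hmn : m ≤ n) : 0 < binomMass n p m := by
  have : 0 < 1 - p := by linarith
  have : 0 < n.choose m := Nat.choose_pos hmn
  unfold binomMass; positivity

theorem pow_div_binomMass (hp : 0 < p) (hp1 : p < 1) (hmn : m ≤ n) :
    p ^ n / binomMass n p m = (p / (1 - p)) ^ m / n.choose m := by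
  have : 0 < 1 - p := by linarith
  have : 0 < n.choose m := Nat.choose_pos hmn
  rw [binomMass, div_pow, ← Nat.sub_add_cancel hmn, pow_add, Nat.add_sub_cancel]
  field_simp

theorem le_pow_div_sum_binomMass (hn : 0 < n) (hp : 0 < p) (hp1 : p < 1) (hmn : m ≤ n)
    (hratio : ∀ i < m, binomMass n p i ≤ 1 / 2 * binomMass n p (i + 1)) :
    √(2 * m) * (p / (1 - p) * (m / exp 1 / n)) ^ m / 2 ≤
      p ^ n / ∑ i ∈ range (m + 1), binomMass n p i := by
  have hmass := binomMass_pos hp hp1 hmn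
  have hsum : ∑ i ∈ range (m + 1), binomMass n p i ≤ 2 * binomMass n p m := by
    linarith [sum_range_succ_add_le_two_mul_of_le_half hratio, binomMass_nonneg hp hp1 (n := n) 0]
  have hchoose : 0 < (n.choose m : ℝ) := by exact_mod_cast Nat.choose_pos hmn
  calc √(2 * m) * (p / (1 - p) * (m / exp 1 / n)) ^ m / 2
      = (p / (1 - p)) ^ m * (√(2 * m) * (m / exp 1) ^ m) / (2 * (n : ℝ) ^ m) := by
        rw [mul_pow, div_pow (m / exp 1)]; ring
    _ ≤ (p / (1 - p)) ^ m / (2 * n.choose m) := by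
        rw [div_le_div_iff₀ (by positivity) (by positivity)]
        calc _ = 2 * (p / (1 - p)) ^ m * (n.choose m * (√(2 * m) * (m / exp 1) ^ m)) := by ring
          _ ≤ 2 * (p / (1 - p)) ^ m * (n : ℝ) ^ m := by
              gcongr; exact Nat.choose_mul_sqrt_two_mul_le_pow n m
          _ = _ := by ring
    _ = p ^ n / (2 * binomMass n p m) := by
        rw [← div_div, ← div_div, div_right_comm (p ^ n), pow_div_binomMass hp hp1 hmn,
          div_right_comm]
    _ ≤ p ^ n / ∑ i ∈ range (m + 1), binomMass n p i :=
        div_le_div_of_nonneg_left (by positivity)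
          (hmass.trans_le (single_le_sum (fun i _ => binomMass_nonneg hp hp1 i)
            (self_mem_range_succ m))) hsum

theorem pow_div_sum_binomMass_le (hm : m ≠ 0) (hp : 0 < p) (hp1 : p < 1) (hmn : 2 * m ≤ n) :
    p ^ n / ∑ i ∈ range (m + 1), binomMass n p i ≤
      exp 1 * √m * (p / (1 - p) * (m / exp 1 / n)) ^ m * exp (2 * m ^ 2 / n) := by
  have hmn' : m ≤ n := by omega
  have hn : (0 : ℝ) < n := by exact_mod_cast (show 0 < n by omega)
  have hchoose : 0 < (n.choose m : ℝ) := by exact_mod_cast Nat.choose_pos hmn'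
  have hpow :
      (n : ℝ) ^ m ≤ exp 1 * n.choose m * (√m * (m / exp 1) ^ m) * exp (2 * m ^ 2 / n) := by
    have h := (exp_neg_mul_pow_le_sub_pow hmn).trans (Nat.sub_pow_le_exp_one_mul_choose_mul hm hmn')
    rwa [exp_neg, inv_mul_le_iff₀ (exp_pos _), mul_comm (exp _)] at h
  calc p ^ n / ∑ i ∈ range (m + 1), binomMass n p i ≤ p ^ n / binomMass n p m :=
        div_le_div_of_nonneg_left (by positivity) (binomMass_pos hp hp1 hmn')
          (single_le_sum (fun i _ => binomMass_nonneg hp hp1 i) (self_mem_range_succ m))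
    _ = (p / (1 - p)) ^ m / n.choose m := pow_div_binomMass hp hp1 hmn'
    _ ≤ (p / (1 - p)) ^ m * (exp 1 * √m * (m / exp 1) ^ m * exp (2 * m ^ 2 / n)) /
          (n : ℝ) ^ m := by
        have hq : 0 < p / (1 - p) := div_pos hp (by linarith)
        rw [div_le_div_iff₀ hchoose (by positivity)]
        calc _ ≤ (p / (1 - p)) ^ m *
              (exp 1 * n.choose m * (√m * (m / exp 1) ^ m) * exp (2 * m ^ 2 / n)) := by gcongr
          _ = _ := by ring
    _ = exp 1 * √m * (p / (1 - p) * (m / exp 1 / n)) ^ m * exp (2 * m ^ 2 / n) := by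
        rw [mul_pow, div_pow (m / exp 1)]; ring

end BinomialTail

theorem stmt11 :
    ∃ c C C' : ℝ, 0 < c ∧ 0 < C ∧ 0 < C' ∧
      ∀ (n k : ℕ) (p : ℝ), 0 < n → 0 < k → Even k → 0 < p → p < 1 →
        (k : ℝ) ≤ C' * n * (1 - p) →
        (∀ i : ℕ, i < k / 2 →
          (n.choose i : ℝ) * p ^ (n - i) * (1 - p) ^ i ≤
            1 / 2 * ((n.choose (i + 1) : ℝ) * p ^ (n - (i + 1)) * (1 - p) ^ (i + 1))) →
        c * Real.sqrt k * (p * k / (2 * Real.exp 1 * (1 - p) * n)) ^ (k / 2) ≤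
            p ^ n / (∑ i ∈ Finset.range (k / 2 + 1),
              (n.choose i : ℝ) * (1 - p) ^ i * p ^ (n - i)) ∧
          p ^ n / (∑ i ∈ Finset.range (k / 2 + 1),
              (n.choose i : ℝ) * (1 - p) ^ i * p ^ (n - i)) ≤
            C * Real.sqrt k * (p * k / (2 * Real.exp 1 * (1 - p) * n)) ^ (k / 2) *
              Real.exp ((k : ℝ) ^ 2 / (2 * n)) := by
  refine ⟨1 / 2, exp 1, 1, one_half_pos, exp_pos 1, one_pos, ?_⟩
  rintro n k p hn hk ⟨m, rfl⟩ hp hp1 hkn hratio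
  have hm : (m + m) / 2 = m := by omega
  have hmn : 2 * m ≤ n := by
    have h : ((m + m : ℕ) : ℝ) ≤ n := by nlinarith
    have : m + m ≤ n := by exact_mod_cast h
    omega
  have hbase :
      p * ((m + m : ℕ) : ℝ) / (2 * exp 1 * (1 - p) * n) = p / (1 - p) * (m / exp 1 / n) := by
    have : 1 - p ≠ 0 := by linarith
    push_cast; field_simp; ring
  have hsqrt : √((m + m : ℕ) : ℝ) = √(2 * m) := by push_cast; ring_nf
  have hexp : ((m + m : ℕ) : ℝ) ^ 2 / (2 * n) = 2 * m ^ 2 / n := by push_cast; ring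
  rw [hm, hbase, hsqrt, hexp]
  have hratio' : ∀ i < m, binomMass n p i ≤ 1 / 2 * binomMass n p (i + 1) := fun i hi => by
    unfold binomMass; linear_combination hratio i (by omega)
  constructor
  · exact (le_of_eq (by ring)).trans (le_pow_div_sum_binomMass hn hp hp1 (by omega) hratio')
  · refine (pow_div_sum_binomMass_le (by omega) hp hp1 hmn).trans ?_
    gcongr
    linarith
end

section
/- Let x be an integer, m, R positive integers with m ≥ 2R, and let a_1, ..., a_s be elements of an index set S_4 = {i : a_i ≥ x + τm} with 2s ≤ k, where τ > 4. Then ∏_{i ∈ S_4} (a_i - x)² / ((a_i - w)(a_i + 1 - w)) ≤ (τ/(τ-3))^{2s} ≤ exp(12k/τ) for any w with x + 2m ≤ w ≤ x + 3m. -/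
open Finset

lemma div_sub_le_div_sub_three {A d τ : ℝ} (hτ : 3 < τ) (hdA : τ * d ≤ 3 * A) (hd : d ≤ A) :
    A / (A - d) ≤ τ / (τ - 3) := by
  refine div_le_of_le_mul₀ (sub_nonneg.mpr hd) (div_nonneg (by linarith) (by linarith)) ?_
  rw [div_mul_eq_mul_div, le_div_iff₀ (by linarith)]
  linarith

lemma sq_sub_div_mul_sub_mem_Icc {τ m a x w : ℝ} (hτ : 3 < τ) (hm : 0 ≤ m) (ha : x + τ * m ≤ a)
    (hw : w ≤ x + 3 * m) :
    (a - x) ^ 2 / ((a - w) * (a + 1 - w)) ∈ Set.Icc 0 ((τ / (τ - 3)) ^ 2) := by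
  have h3m : 3 * m ≤ τ * m := by nlinarith
  have hτd : τ * (w - x) ≤ 3 * (a - x) := by nlinarith
  have hw_le : w ≤ a := by linarith
  refine ⟨div_nonneg (sq_nonneg _) (mul_nonneg (by linarith) (by linarith)), ?_⟩
  have hfirst : (a - x) / (a - w) ≤ τ / (τ - 3) := by
    simpa using div_sub_le_div_sub_three hτ hτd (by linarith)
  have hsecond : (a - x) / (a + 1 - w) ≤ τ / (τ - 3) := by
    have := div_sub_le_div_sub_three (A := a - x) (d := w - x - 1) hτ (by nlinarith) (by linarith)
    rwa [show a - x - (w - x - 1) = a + 1 - w by ring] at this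
  rw [sq, mul_div_mul_comm, sq]
  exact mul_le_mul hfirst hsecond (div_nonneg (by linarith) (by linarith))
    (div_nonneg (by linarith) (by linarith))

lemma div_sub_three_le_exp {τ : ℝ} (hτ : 4 ≤ τ) : τ / (τ - 3) ≤ Real.exp (12 / τ) :=
  calc τ / (τ - 3) = 3 / (τ - 3) + 1 := by rw [div_add_one (by linarith)]; ring
    _ ≤ Real.exp (3 / (τ - 3)) := Real.add_one_le_exp _
    _ ≤ Real.exp (12 / τ) := by
      rw [Real.exp_le_exp, div_le_div_iff₀ (by linarith) (by linarith)]
      linarith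

lemma div_sub_three_pow_le_exp {τ : ℝ} (hτ : 4 ≤ τ) {n k : ℕ} (hnk : n ≤ k) :
    (τ / (τ - 3)) ^ n ≤ Real.exp (12 * k / τ) :=
  calc (τ / (τ - 3)) ^ n ≤ Real.exp (12 / τ) ^ n :=
        pow_le_pow_left₀ (div_nonneg (by linarith) (by linarith)) (div_sub_three_le_exp hτ) n
    _ = Real.exp (n * (12 / τ)) := (Real.exp_nat_mul _ n).symm
    _ ≤ Real.exp (12 * k / τ) := by
      rw [mul_div_assoc', mul_comm]
      gcongr

theorem stmt16_general (k s m : ℕ)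
    (hs : 2 * s ≤ k) (τ : ℝ) (hτ : 4 < τ)
    (x : ℤ) (a : Fin s → ℤ) (ha : ∀ i, (x : ℝ) + τ * m ≤ (a i : ℝ))
    (w : ℝ) (hw2 : w ≤ (x : ℝ) + 3 * m) :
    (∏ i, ((a i : ℝ) - x) ^ 2 / (((a i : ℝ) - w) * ((a i : ℝ) + 1 - w))) ≤
        (τ / (τ - 3)) ^ (2 * s) ∧
      (τ / (τ - 3)) ^ (2 * s) ≤ Real.exp (12 * k / τ) := by
  have hfactor i := sq_sub_div_mul_sub_mem_Icc (by linarith) (Nat.cast_nonneg m) (ha i) hw2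
  refine ⟨?_, div_sub_three_pow_le_exp hτ.le hs⟩
  calc (∏ i, ((a i : ℝ) - x) ^ 2 / (((a i : ℝ) - w) * ((a i : ℝ) + 1 - w)))
      ≤ ∏ _i : Fin s, (τ / (τ - 3)) ^ 2 :=
        prod_le_prod (fun i _ => (hfactor i).1) (fun i _ => (hfactor i).2)
    _ = (τ / (τ - 3)) ^ (2 * s) := by rw [prod_const, card_univ, Fintype.card_fin, pow_mul]

theorem stmt16 (k s m R : ℕ) (hm : 0 < m) (hR : 0 < R) (hmR : 2 * R ≤ m)
    (hs : 2 * s ≤ k) (τ : ℝ) (hτ : 4 < τ)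
    (x : ℤ) (a : Fin s → ℤ) (ha : ∀ i, (x : ℝ) + τ * m ≤ (a i : ℝ))
    (w : ℝ) (hw1 : (x : ℝ) + 2 * m ≤ w) (hw2 : w ≤ (x : ℝ) + 3 * m) :
    (∏ i, ((a i : ℝ) - x) ^ 2 / (((a i : ℝ) - w) * ((a i : ℝ) + 1 - w))) ≤
        (τ / (τ - 3)) ^ (2 * s) ∧
      (τ / (τ - 3)) ^ (2 * s) ≤ Real.exp (12 * k / τ) :=
  stmt16_general k s m hs τ hτ x a ha w hw2
end
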